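/- arXiv:2009.11657 — 3 statements merged into one kernel-verified Lean document; each statement's English description precedes it below -/
import Mathlib

section
/- Let ν ≥ 1, let a ∈ ℂ \ {0}, let z₁,…,z_m ∈ ℂ be pairwise distinct, let μ₁,…,μ_m ≥ 1 be integers with μ₁+⋯+μ_m = ν, and set P := a·∏_{j=1}^m (X−z_j)^{μ_j} and, for k = 1,…,m, P_k := a·(X−z_k)^{μ_k−1}·∏_{j≠k}(X−z_j)^{μ_j}. Then for every sequence v : ℕ → ℂ and every n ∈ ℕ, writing P = Σ_i c_i X^i, one has 2·Re( conj(Σ_{i=1}^{ν} i·c_i·v(n+i)) · (P(T)v)(n) ) − ν·|(P(T)v)(n)|² = [ Σ_{k=1}^m μ_k·|(P_k(T)v)(n+1)|² − Σ_{k=1}^m μ_k·|(P_k(T)v)(n)|² ] + Σ_{k=1}^m μ_k·(1−|z_k|²)·|(P_k(T)v)(n)|². -/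
open Polynomial

/-- The action `(Q(T)v)(n) = Σ_i c_i v(n+i)` of a polynomial `Q = Σ_i c_i X^i`
on a sequence `v : ℕ → ℂ`, where `T` is the shift operator. -/
noncomputable def polyAct (Q : Polynomial ℂ) (v : ℕ → ℂ) (n : ℕ) : ℂ :=
  ∑ i ∈ Finset.range (Q.natDegree + 1), Q.coeff i * v (n + i)

/-- `P = a ∏_j (X − z_j)^{μ_j}`. -/
noncomputable def Ppoly (m : ℕ) (a : ℂ) (z : Fin m → ℂ) (μ : Fin m → ℕ) : Polynomial ℂ :=
  C a * ∏ j : Fin m, (X - C (z j)) ^ (μ j)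

/-- `P_k = a (X − z_k)^{μ_k−1} ∏_{j≠k} (X − z_j)^{μ_j}`. -/
noncomputable def Pkpoly (m : ℕ) (a : ℂ) (z : Fin m → ℂ) (μ : Fin m → ℕ) (k : Fin m) :
    Polynomial ℂ :=
  C a * (X - C (z k)) ^ (μ k - 1) * ∏ j ∈ Finset.univ.erase k, (X - C (z j)) ^ (μ j)

/-!
`polyAct Q v n` is `(aeval T Q v) n` for the shift `T`, so it is linear and multiplicative in `Q`.
Put `A_k = (P_k(T)v)(n+1)` and `B_k = (P_k(T)v)(n)`. From `P = (X - z_k) P_k` we get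
`(P(T)v)(n) = A_k - z_k B_k` for every `k`, and from `P' = Σ_k μ_k P_k` we get
`T(P'(T)v)(n) = Σ_k μ_k A_k`. Since `ν = Σ_k μ_k`, both sides split into `k`-terms weighted by
`μ_k`, and the `k`-th terms agree by the identity
`2 Re(conj A · (A - zB)) - |A - zB|² = |A|² - |B|² + (1 - |z|²)|B|²`.
-/

noncomputable abbrev shift : Module.End ℂ (ℕ → ℂ) := LinearMap.funLeft ℂ ℂ (· + 1)

theorem shift_pow_apply (i : ℕ) (v : ℕ → ℂ) (n : ℕ) : (shift ^ i) v n = v (n + i) := by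
  induction i generalizing v with
  | zero => simp
  | succ i ih =>
    rw [pow_succ, Module.End.mul_apply, ih]
    simp [LinearMap.funLeft_apply, add_assoc]

theorem polyAct_eq_aeval_shift (Q : ℂ[X]) (v : ℕ → ℂ) (n : ℕ) :
    polyAct Q v n = aeval shift Q v n := by
  simp [polyAct, aeval_eq_sum_range, LinearMap.sum_apply, Finset.sum_apply, shift_pow_apply]

theorem polyAct_X_sub_C_mul (z : ℂ) (Q : ℂ[X]) (v : ℕ → ℂ) (n : ℕ) :
    polyAct ((X - C z) * Q) v n = polyAct Q v (n + 1) - z * polyAct Q v n := by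
  simp [polyAct_eq_aeval_shift, Module.algebraMap_end_apply, LinearMap.funLeft_apply]

theorem polyAct_sum_C_mul {ι : Type*} (s : Finset ι) (c : ι → ℂ) (Q : ι → ℂ[X]) (v : ℕ → ℂ)
    (n : ℕ) :
    polyAct (∑ k ∈ s, C (c k) * Q k) v n = ∑ k ∈ s, c k * polyAct (Q k) v n := by
  simp [polyAct_eq_aeval_shift, LinearMap.sum_apply, Finset.sum_apply, Module.algebraMap_end_apply]

theorem polyAct_eq_sum_range {Q : ℂ[X]} {N : ℕ} (hN : Q.natDegree < N) (v : ℕ → ℂ) (n : ℕ) :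
    polyAct Q v n = ∑ i ∈ Finset.range N, Q.coeff i * v (n + i) :=
  Finset.sum_subset (Finset.range_subset_range.2 hN) fun i _ hi =>
    by rw [coeff_eq_zero_of_natDegree_lt (by simpa using hi), zero_mul]

theorem sum_Icc_natCast_mul_coeff_eq_polyAct_derivative {P : ℂ[X]} {N : ℕ} (hP : P.natDegree ≤ N)
    (v : ℕ → ℂ) (n : ℕ) :
    ∑ i ∈ Finset.Icc 1 N, (i : ℂ) * P.coeff i * v (n + i) = polyAct (derivative P) v (n + 1) := by
  have hdeg : (derivative P).natDegree < N + 1 := (natDegree_derivative_le P).trans_lt (by omega)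
  rw [polyAct_eq_sum_range hdeg, Finset.sum_range_succ,
    coeff_derivative, coeff_eq_zero_of_natDegree_lt (by omega : P.natDegree < N + 1),
    ← Finset.Ico_add_one_right_eq_Icc, Finset.sum_Ico_eq_sum_range]
  simp only [zero_mul, add_zero, Nat.add_sub_cancel, coeff_derivative]
  refine Finset.sum_congr rfl fun i _ => ?_
  rw [add_comm 1 i, ← add_assoc, add_right_comm]
  push_cast
  ring

theorem two_mul_re_conj_mul_sub_mul_sub_norm_sq (A B z : ℂ) :
    2 * ((starRingEnd ℂ) A * (A - z * B)).re - ‖A - z * B‖ ^ 2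
      = ‖A‖ ^ 2 - ‖B‖ ^ 2 + (1 - ‖z‖ ^ 2) * ‖B‖ ^ 2 := by
  simp only [Complex.sq_norm, Complex.normSq_apply, Complex.mul_re, Complex.mul_im,
    Complex.sub_re, Complex.sub_im, Complex.conj_re, Complex.conj_im]
  ring

section

variable {m : ℕ} {a : ℂ} {z : Fin m → ℂ} {μ : Fin m → ℕ}

theorem Ppoly_eq_X_sub_C_mul_Pkpoly {k : Fin m} (hk : 1 ≤ μ k) :
    Ppoly m a z μ = (X - C (z k)) * Pkpoly m a z μ k := by
  rw [Ppoly, Pkpoly, ← Finset.mul_prod_erase _ _ (Finset.mem_univ k), ← Nat.sub_add_cancel hk,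
    pow_succ, Nat.add_sub_cancel]
  ring

theorem derivative_Ppoly : derivative (Ppoly m a z μ) = ∑ k, C (μ k : ℂ) * Pkpoly m a z μ k := by
  rw [Ppoly, derivative_C_mul, derivative_prod_finset, Finset.mul_sum]
  refine Finset.sum_congr rfl fun k _ => ?_
  rw [derivative_X_sub_C_pow, Pkpoly]
  ring

theorem natDegree_Ppoly_le : (Ppoly m a z μ).natDegree ≤ ∑ j, μ j :=
  (natDegree_C_mul_le _ _).trans <| (natDegree_prod_le _ _).trans <|
    Finset.sum_le_sum fun j _ => natDegree_pow_le.trans (by rw [natDegree_X_sub_C, mul_one])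

end

theorem stmt_1_general (ν m : ℕ) (a : ℂ)
    (z : Fin m → ℂ)
    (μ : Fin m → ℕ) (hμ : ∀ k, 1 ≤ μ k) (hsum : ∑ k : Fin m, μ k = ν)
    (v : ℕ → ℂ) (n : ℕ) :
    2 * ((starRingEnd ℂ)
          (∑ i ∈ Finset.Icc 1 ν, (i : ℂ) * (Ppoly m a z μ).coeff i * v (n + i))
            * polyAct (Ppoly m a z μ) v n).re
      - (ν : ℝ) * ‖polyAct (Ppoly m a z μ) v n‖ ^ 2
    = (∑ k : Fin m, (μ k : ℝ) * ‖polyAct (Pkpoly m a z μ k) v (n + 1)‖ ^ 2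
        - ∑ k : Fin m, (μ k : ℝ) * ‖polyAct (Pkpoly m a z μ k) v n‖ ^ 2)
      + ∑ k : Fin m, (μ k : ℝ) * (1 - ‖z k‖ ^ 2)
          * ‖polyAct (Pkpoly m a z μ k) v n‖ ^ 2 := by
  rw [sum_Icc_natCast_mul_coeff_eq_polyAct_derivative (hsum ▸ natDegree_Ppoly_le),
    derivative_Ppoly, polyAct_sum_C_mul, ← hsum, Nat.cast_sum, map_sum, Finset.sum_mul,
    Complex.re_sum, Finset.mul_sum, Finset.sum_mul, ← Finset.sum_sub_distrib,
    ← Finset.sum_sub_distrib, ← Finset.sum_add_distrib]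
  refine Finset.sum_congr rfl fun k _ => ?_
  rw [Ppoly_eq_X_sub_C_mul_Pkpoly (hμ k), polyAct_X_sub_C_mul, map_mul, map_natCast, mul_assoc,
    ← Complex.ofReal_natCast, Complex.re_ofReal_mul]
  linear_combination (μ k : ℝ) * two_mul_re_conj_mul_sub_mul_sub_norm_sq
    (polyAct (Pkpoly m a z μ k) v (n + 1)) (polyAct (Pkpoly m a z μ k) v n) (z k)

/-- the exact energy-dissipation balance law
`2 Re( conj(T(P'(T)v)(n)) · (P(T)v)(n) ) − ν |(P(T)v)(n)|²
  = [Σ_k μ_k |(P_k(T)v)(n+1)|² − Σ_k μ_k |(P_k(T)v)(n)|²]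
    + Σ_k μ_k (1−|z_k|²) |(P_k(T)v)(n)|²`
for `P = a ∏ (X−z_j)^{μ_j}` with pairwise distinct `z_j` and `Σ μ_j = ν`. -/
theorem stmt_1 (ν m : ℕ) (hν : 1 ≤ ν) (a : ℂ) (ha : a ≠ 0)
    (z : Fin m → ℂ) (hz : Function.Injective z)
    (μ : Fin m → ℕ) (hμ : ∀ k, 1 ≤ μ k) (hsum : ∑ k : Fin m, μ k = ν)
    (v : ℕ → ℂ) (n : ℕ) :
    2 * ((starRingEnd ℂ)
          (∑ i ∈ Finset.Icc 1 ν, (i : ℂ) * (Ppoly m a z μ).coeff i * v (n + i))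
            * polyAct (Ppoly m a z μ) v n).re
      - (ν : ℝ) * ‖polyAct (Ppoly m a z μ) v n‖ ^ 2
    = (∑ k : Fin m, (μ k : ℝ) * ‖polyAct (Pkpoly m a z μ k) v (n + 1)‖ ^ 2
        - ∑ k : Fin m, (μ k : ℝ) * ‖polyAct (Pkpoly m a z μ k) v n‖ ^ 2)
      + ∑ k : Fin m, (μ k : ℝ) * (1 - ‖z k‖ ^ 2)
          * ‖polyAct (Pkpoly m a z μ k) v n‖ ^ 2 :=
  stmt_1_general ν m a z μ hμ hsum v n
end

section
/- Let ν ≥ 1, let a ∈ ℂ \ {0}, let z₁,…,z_m ∈ ℂ be pairwise distinct with |z_k| ≤ 1 for all k, let μ₁,…,μ_m ≥ 1 be integers with μ₁+⋯+μ_m = ν, and let ε ∈ (0,1/4]. Set P_k := a·(X−z_k)^{μ_k−1}·∏_{j≠k}(X−z_j)^{μ_j} and, for 1 ≤ j ≤ μ_k−1, Q_{k,j} := a·(X−z_k)^{j−1}·∏_{ℓ≠k}(X−z_ℓ)^{μ_ℓ} (so each Q_{k,j} has degree ≤ ν−2). Then the Hermitian form q_d on ℂ^ν defined by q_d(w⁰,…,w^{ν−1})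 := Σ_{k=1}^m μ_k·(1−|z_k|²)·|P_k(T)w⁰|² + Σ_{k=1}^m Σ_{j=1}^{μ_k−1} ε^{μ_k−j}·(1−|z_k|²)^{2(μ_k−j)}·( |Q_{k,j}(T)w⁰|² − |Q_{k,j}(T)w¹|² ) is nonnegative, where Q_{k,j}(T)w¹ := Σ_i q_i·w^{1+i} for Q_{k,j} = Σ_i q_i X^i (well defined since deg Q_{k,j} ≤ ν−2). -/
open Polynomial

/-- `Q_{k,j} = a (X − z_k)^{j−1} ∏_{ℓ≠k} (X − z_ℓ)^{μ_ℓ}`. -/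
noncomputable def Qkjpoly (m : ℕ) (a : ℂ) (z : Fin m → ℂ) (μ : Fin m → ℕ) (k : Fin m)
    (j : ℕ) : Polynomial ℂ :=
  C a * (X - C (z k)) ^ (j - 1) * ∏ l ∈ Finset.univ.erase k, (X - C (z l)) ^ (μ l)

/-- The action `R(T)w⁰ = Σ_i r_i w^i` of a polynomial `R = Σ_i r_i X^i` of degree
`≤ ν−1` on a vector `(w⁰,…,w^{ν−1}) ∈ ℂ^ν`. -/
noncomputable def polyActV (ν : ℕ) (R : Polynomial ℂ) (w : Fin ν → ℂ) : ℂ :=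
  ∑ i : Fin ν, R.coeff i * w i

/-- The shifted action `R(T)w¹ = Σ_i r_i w^{1+i}` of a polynomial `R = Σ_i r_i X^i`
of degree `≤ ν−2` on a vector `(w⁰,…,w^{ν−1}) ∈ ℂ^ν`. -/
noncomputable def polyActVShift (ν : ℕ) (R : Polynomial ℂ) (w : Fin ν → ℂ) : ℂ :=
  ∑ i : Fin (ν - 1), R.coeff i.1 * w ⟨i.1 + 1, by have := i.isLt; omega⟩

/-!
Fix `k`, write `r = 1 - |z_k|²` and `u_j = Q_{k,j}(T)w⁰`, so that `P_k(T)w⁰ = u_{μ_k}`.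
Since `X Q_{k,j} = Q_{k,j+1} + z_k Q_{k,j}`, the shifted value is `Q_{k,j}(T)w¹ = u_{j+1} + z_k u_j`,
and a weighted AM-GM gives `|u_j|² - |u_{j+1} + z_k u_j|² ≥ (r/2)|u_j|² - (2/r)|u_{j+1}|²`.
With the weights `(εr²)^{μ_k-j}` the sum over `j` telescopes, because `ε ≤ 1/4`, to at least
`-2εr|u_{μ_k}|²`, which the term `μ_k r |u_{μ_k}|²` absorbs. So each `k` contributes a
nonnegative amount.
-/

section PolyAct

variable (ν : ℕ) (w : Fin ν → ℂ)

lemma polyActV_add (P Q : ℂ[X]) :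
    polyActV ν (P + Q) w = polyActV ν P w + polyActV ν Q w := by
  simp [polyActV, add_mul, Finset.sum_add_distrib]

lemma polyActV_C_mul (c : ℂ) (P : ℂ[X]) :
    polyActV ν (C c * P) w = c * polyActV ν P w := by
  simp [polyActV, coeff_C_mul, Finset.mul_sum, mul_assoc]

lemma polyActVShift_eq_polyActV_X_mul (R : ℂ[X]) :
    polyActVShift ν R w = polyActV ν (X * R) w := by
  cases ν with
  | zero => simp [polyActV, polyActVShift]
  | succ n => simp [polyActV, polyActVShift, Fin.sum_univ_succ, coeff_X_mul, Fin.succ]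

end PolyAct

lemma X_mul_Qkjpoly (m : ℕ) (a : ℂ) (z : Fin m → ℂ) (μ : Fin m → ℕ) (k : Fin m)
    {j : ℕ} (hj : 1 ≤ j) :
    X * Qkjpoly m a z μ k j = Qkjpoly m a z μ k (j + 1) + C (z k) * Qkjpoly m a z μ k j := by
  obtain ⟨i, rfl⟩ : ∃ i, j = i + 1 := ⟨j - 1, by omega⟩
  simp only [Qkjpoly, Nat.add_sub_cancel]
  ring

lemma polyActVShift_Qkjpoly (ν m : ℕ) (a : ℂ) (z : Fin m → ℂ) (μ : Fin m → ℕ) (k : Fin m)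
    (w : Fin ν → ℂ) {j : ℕ} (hj : 1 ≤ j) :
    polyActVShift ν (Qkjpoly m a z μ k j) w =
      polyActV ν (Qkjpoly m a z μ k (j + 1)) w + z k * polyActV ν (Qkjpoly m a z μ k j) w := by
  rw [polyActVShift_eq_polyActV_X_mul, X_mul_Qkjpoly m a z μ k hj, polyActV_add,
    polyActV_C_mul]

lemma half_mul_sq_sub_le_norm_sq_sub_norm_add_mul_sq {R : Type*} [SeminormedRing R]
    (z u v : R) {r : ℝ} (hr : 0 < r) (hz : ‖z‖ ^ 2 = 1 - r) :
    r / 2 * ‖u‖ ^ 2 - 2 / r * ‖v‖ ^ 2 ≤ ‖u‖ ^ 2 - ‖v + z * u‖ ^ 2 := by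
  have htri : ‖v + z * u‖ ≤ ‖v‖ + ‖z‖ * ‖u‖ :=
    (norm_add_le _ _).trans (by gcongr; exact norm_mul_le _ _)
  have hsq : ‖v + z * u‖ ^ 2 ≤ (‖v‖ + ‖z‖ * ‖u‖) ^ 2 :=
    pow_le_pow_left₀ (norm_nonneg _) htri 2
  have hamgm : 0 ≤ r / 2 * (‖u‖ - 2 * ‖z‖ * ‖v‖ / r) ^ 2 + ‖v‖ ^ 2 := by positivity
  have hexpand : r / 2 * (‖u‖ - 2 * ‖z‖ * ‖v‖ / r) ^ 2 + ‖v‖ ^ 2 =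
      (‖u‖ ^ 2 - (‖v‖ + ‖z‖ * ‖u‖) ^ 2) - (r / 2 * ‖u‖ ^ 2 - 2 / r * ‖v‖ ^ 2) := by
    field_simp
    linear_combination (2 * r * ‖u‖ ^ 2 + 4 * ‖v‖ ^ 2) * hz
  linarith

/-- Weighted telescoping: for `ρ β ≤ α` the interior terms of the sum are nonnegative. -/
lemma neg_mul_le_sum_pow_mul_sub {ρ α β : ℝ} (hρ : 0 ≤ ρ) (hβ : 0 ≤ β) (hαβ : ρ * β ≤ α)
    {x : ℕ → ℝ} (hx : ∀ j, 0 ≤ x j) (n : ℕ) :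
    -(ρ * β) * x (n + 1) ≤
      ∑ j ∈ Finset.Icc 1 n, ρ ^ (n + 1 - j) * (α * x j - β * x (j + 1)) := by
  induction n with
  | zero => simpa using mul_nonneg (mul_nonneg hρ hβ) (hx 1)
  | succ n ih =>
    have hshift : ∑ j ∈ Finset.Icc 1 n, ρ ^ (n + 1 + 1 - j) * (α * x j - β * x (j + 1)) =
        ρ * ∑ j ∈ Finset.Icc 1 n, ρ ^ (n + 1 - j) * (α * x j - β * x (j + 1)) := by
      rw [Finset.mul_sum]
      refine Finset.sum_congr rfl fun j hj => ?_
      rw [show n + 1 + 1 - j = n + 1 - j + 1 by grind, pow_succ]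
      ring
    rw [Finset.sum_Icc_succ_top (by omega), hshift, show n + 1 + 1 - (n + 1) = 1 by omega,
      pow_one]
    have hρih := mul_le_mul_of_nonneg_left ih hρ
    have hmid : 0 ≤ ρ * (α - ρ * β) * x (n + 1) :=
      mul_nonneg (mul_nonneg hρ (by linarith)) (hx _)
    nlinarith

lemma dissipation_block_nonneg (z : ℂ) (hz : ‖z‖ ≤ 1) {N : ℕ} (hN : 1 ≤ N)
    {ε : ℝ} (hε : 0 ≤ ε) (hε' : ε ≤ 1 / 4) (u s : ℕ → ℂ)
    (hs : ∀ j, 1 ≤ j → s j = u (j + 1) + z * u j) :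
    0 ≤ N * (1 - ‖z‖ ^ 2) * ‖u N‖ ^ 2 +
      ∑ j ∈ Finset.Icc 1 (N - 1),
        ε ^ (N - j) * (1 - ‖z‖ ^ 2) ^ (2 * (N - j)) * (‖u j‖ ^ 2 - ‖s j‖ ^ 2) := by
  set r := 1 - ‖z‖ ^ 2 with hr
  have hr₀ : 0 ≤ r := by nlinarith [norm_nonneg z]
  obtain ⟨n, rfl⟩ : ∃ n, N = n + 1 := ⟨N - 1, by omega⟩
  rw [Nat.add_sub_cancel]
  rcases hr₀.eq_or_lt with hr0 | hrpos
  · rw [← hr0]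
    refine add_nonneg (by simp) (Finset.sum_nonneg fun j hj => ?_)
    rw [zero_pow (by grind), mul_zero, zero_mul]
  have hterm : ∀ j ∈ Finset.Icc 1 n,
      (ε * r ^ 2) ^ (n + 1 - j) * (r / 2 * ‖u j‖ ^ 2 - 2 / r * ‖u (j + 1)‖ ^ 2) ≤
        ε ^ (n + 1 - j) * r ^ (2 * (n + 1 - j)) * (‖u j‖ ^ 2 - ‖s j‖ ^ 2) := by
    intro j hj
    rw [hs j (Finset.mem_Icc.1 hj).1, pow_mul, ← mul_pow]
    exact mul_le_mul_of_nonneg_left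
      (half_mul_sq_sub_le_norm_sq_sub_norm_add_mul_sq z _ _ hrpos (by rw [hr]; ring))
      (by positivity)
  have hρβ : ε * r ^ 2 * (2 / r) = 2 * ε * r := by field_simp
  have htele := neg_mul_le_sum_pow_mul_sub (ρ := ε * r ^ 2) (α := r / 2) (β := 2 / r)
    (x := fun j => ‖u j‖ ^ 2) (by positivity) (by positivity) (by rw [hρβ]; nlinarith)
    (fun j => sq_nonneg ‖u j‖) n
  rw [hρβ] at htele
  have hlast : 0 ≤ ((n + 1 : ℕ) - 2 * ε) * r * ‖u (n + 1)‖ ^ 2 := by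
    have : (1 : ℝ) ≤ (n + 1 : ℕ) := by exact_mod_cast Nat.le_add_left 1 n
    exact mul_nonneg (mul_nonneg (by linarith) hr₀) (sq_nonneg _)
  linarith [Finset.sum_le_sum hterm]

theorem stmt_3_general (ν m : ℕ) (a : ℂ)
    (z : Fin m → ℂ)
    (μ : Fin m → ℕ) (hμ : ∀ k, 1 ≤ μ k)
    (hzdisk : ∀ k, ‖z k‖ ≤ 1)
    (ε : ℝ) (hε : 0 < ε) (hε' : ε ≤ 1 / 4) :
    ∀ w : Fin ν → ℂ,
      0 ≤ ∑ k : Fin m, (μ k : ℝ) * (1 - ‖z k‖ ^ 2)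
              * ‖polyActV ν (Pkpoly m a z μ k) w‖ ^ 2
          + ∑ k : Fin m, ∑ j ∈ Finset.Icc 1 (μ k - 1),
              ε ^ (μ k - j) * (1 - ‖z k‖ ^ 2) ^ (2 * (μ k - j))
                * (‖polyActV ν (Qkjpoly m a z μ k j) w‖ ^ 2
                    - ‖polyActVShift ν (Qkjpoly m a z μ k j) w‖ ^ 2) := by
  intro w
  rw [← Finset.sum_add_distrib]
  refine Finset.sum_nonneg fun k _ => ?_
  exact dissipation_block_nonneg (z k) (hzdisk k) (hμ k) hε.le hε'
    (fun j => polyActV ν (Qkjpoly m a z μ k j) w)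
    (fun j => polyActVShift ν (Qkjpoly m a z μ k j) w)
    fun j hj => polyActVShift_Qkjpoly ν m a z μ k w hj

/-- nonnegativity, for `0 < ε ≤ 1/4`, of the dissipation form
`q_d(w) = Σ_k μ_k (1−|z_k|²) |P_k(T)w⁰|²
  + Σ_k Σ_{j=1}^{μ_k−1} ε^{μ_k−j} (1−|z_k|²)^{2(μ_k−j)} (|Q_{k,j}(T)w⁰|² − |Q_{k,j}(T)w¹|²)`. -/
theorem stmt_3 (ν m : ℕ) (hν : 1 ≤ ν) (a : ℂ) (ha : a ≠ 0)
    (z : Fin m → ℂ) (hz : Function.Injective z)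
    (μ : Fin m → ℕ) (hμ : ∀ k, 1 ≤ μ k) (hsum : ∑ k : Fin m, μ k = ν)
    (hzdisk : ∀ k, ‖z k‖ ≤ 1)
    (ε : ℝ) (hε : 0 < ε) (hε' : ε ≤ 1 / 4) :
    ∀ w : Fin ν → ℂ,
      0 ≤ ∑ k : Fin m, (μ k : ℝ) * (1 - ‖z k‖ ^ 2)
              * ‖polyActV ν (Pkpoly m a z μ k) w‖ ^ 2
          + ∑ k : Fin m, ∑ j ∈ Finset.Icc 1 (μ k - 1),
              ε ^ (μ k - j) * (1 - ‖z k‖ ^ 2) ^ (2 * (μ k - j))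
                * (‖polyActV ν (Qkjpoly m a z μ k j) w‖ ^ 2
                    - ‖polyActVShift ν (Qkjpoly m a z μ k j) w‖ ^ 2) :=
  stmt_3_general ν m a z μ hμ hzdisk ε hε hε'
end

section
/- Let d ≥ 1, s ∈ ℕ, p, r ∈ ℕ^d, and let a_{ℓ,σ} be real numbers indexed by multi-integers ℓ ∈ ℤ^d with −r ≤ ℓ ≤ p (componentwise) and σ = 0,…,s+1. For κ ∈ (ℂ\{0})^d set Q̂_σ(κ) := Σ_{−r≤ℓ≤p} a_{ℓ,σ}·κ^ℓ, where κ^ℓ := κ₁^{ℓ₁}⋯κ_d^{ℓ_d}. Assume that for every κ with |κ₁| = ⋯ = |κ_d| = 1: Q̂_{s+1}(κ) ≠ 0, every root z ∈ ℂ of the dispersion relation Σ_{σ=0}^{s+1} Q̂_σ(κ)·z^σ = 0 satisfies |z| ≤ 1, and every such root with |z| = 1 is a simple root. Then for every κ with |κ₁| = ⋯ = |κ_d| = 1 and every z ∈ ℂ with |z| ≥ 1, one has Σ_{σ=1}^{s+1} σ·Q̂_σ(κ)·z^{σ−1} ≠ 0. -/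
/-!
By Gauss–Lucas, a root `z` of the derivative of the dispersion polynomial lies in the convex
hull of its roots, hence in the closed unit disc. If moreover `‖z‖ ≥ 1`, then `z` lies on the
unit circle, whose points are extreme points of the disc, so `z` is itself a root of the
dispersion polynomial: a multiple root on the unit circle, which the simplicity assumption
rules out.
-/

/-- The symbol `Q̂_σ(κ) = Σ_{−r≤ℓ≤p} a_{ℓ,σ} κ^ℓ` of the finite difference operator
`Q_σ`, for `κ ∈ (ℂ∖{0})^d`. -/
noncomputable def Qhat (d : ℕ) (p r : Fin d → ℕ) (a : (Fin d → ℤ) → ℕ → ℝ) (σ : ℕ)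
    (κ : Fin d → ℂ) : ℂ :=
  ∑ ℓ ∈ Finset.Icc (fun i => -(r i : ℤ)) (fun i => (p i : ℤ)),
    (a ℓ σ : ℂ) * ∏ i : Fin d, κ i ^ (ℓ i)

open Polynomial Metric

theorem mem_of_mem_convexHull_of_mem_sphere {E : Type*} [NormedAddCommGroup E]
    [NormedSpace ℝ E] [StrictConvexSpace ℝ E] {S : Set E} {x z : E} {r : ℝ} (hr : r ≠ 0)
    (hS : S ⊆ closedBall x r) (hz : z ∈ convexHull ℝ S) (hzr : z ∈ sphere x r) : z ∈ S :=
  extremePoints_convexHull_subset <|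
    inter_extremePoints_subset_extremePoints_of_subset (convexHull_min hS (convex_closedBall x r))
      ⟨hz, StrictConvexSpace.sphere_subset_extremePoints_closedBall x hr hzr⟩

theorem Polynomial.eval_derivative_ne_zero_of_one_le_norm {P : ℂ[X]} (hP : 0 < P.degree)
    (hroots : ∀ w, P.IsRoot w → ‖w‖ ≤ 1)
    (hsimple : ∀ w, P.IsRoot w → ‖w‖ = 1 → P.derivative.eval w ≠ 0)
    {z : ℂ} (hz : 1 ≤ ‖z‖) : P.derivative.eval z ≠ 0 := by
  intro hPz
  have hP₀ : P ≠ 0 := by rintro rfl; simp at hP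
  have hroots_ball : P.rootSet ℂ ⊆ closedBall 0 1 := fun w hw => by
    rw [mem_rootSet_of_ne hP₀, coe_aeval_eq_eval] at hw
    simpa using hroots w hw
  have hz_hull : z ∈ convexHull ℝ (P.rootSet ℂ) := by
    have hP' : P.derivative ≠ 0 := derivative_ne_zero.2 (natDegree_pos_iff_degree_pos.2 hP).ne'
    exact rootSet_derivative_subset_convexHull_rootSet hP
      (by rwa [mem_rootSet_of_ne hP', coe_aeval_eq_eval])
  have hz_sphere : z ∈ sphere (0 : ℂ) 1 := mem_sphere_zero_iff_norm.2 <| le_antisymm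
    (mem_closedBall_zero_iff.1 (convexHull_min hroots_ball (convex_closedBall 0 1) hz_hull)) hz
  have hz_root := mem_of_mem_convexHull_of_mem_sphere one_ne_zero hroots_ball hz_hull hz_sphere
  rw [mem_rootSet_of_ne hP₀, coe_aeval_eq_eval] at hz_root
  exact hsimple z hz_root (mem_sphere_zero_iff_norm.1 hz_sphere) hPz

theorem Polynomial.eval_derivative_sum_range_C_mul_X_pow {R : Type*} [CommSemiring R]
    (c : ℕ → R) (n : ℕ) (z : R) :
    (∑ i ∈ Finset.range (n + 1), C (c i) * X ^ i).derivative.eval z =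
      ∑ i ∈ Finset.Icc 1 n, (i : R) * c i * z ^ (i - 1) := by
  rw [Finset.range_eq_Ico, Finset.sum_eq_sum_Ico_succ_bot n.succ_pos, zero_add, Nat.succ_eq_add_one,
    Finset.Ico_add_one_right_eq_Icc]
  simp only [pow_zero, mul_one, derivative_add, derivative_C, zero_add, derivative_sum,
    eval_finsetSum, derivative_C_mul_X_pow, eval_C_mul, eval_X_pow]
  exact Finset.sum_congr rfl fun i _ => by ring

theorem stmt_6_general (d : ℕ) (s : ℕ) (p r : Fin d → ℕ)
    (a : (Fin d → ℤ) → ℕ → ℝ)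
    (hlead : ∀ κ : Fin d → ℂ, (∀ i, ‖κ i‖ = 1) →
      Qhat d p r a (s + 1) κ ≠ 0)
    (hroots : ∀ κ : Fin d → ℂ, (∀ i, ‖κ i‖ = 1) →
      ∀ z : ℂ, (∑ σ ∈ Finset.range (s + 2), Qhat d p r a σ κ * z ^ σ) = 0 →
        ‖z‖ ≤ 1)
    (hsimple : ∀ κ : Fin d → ℂ, (∀ i, ‖κ i‖ = 1) →
      ∀ z : ℂ, (∑ σ ∈ Finset.range (s + 2), Qhat d p r a σ κ * z ^ σ) = 0 →
        ‖z‖ = 1 →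
        (∑ σ ∈ Finset.Icc 1 (s + 1), (σ : ℂ) * Qhat d p r a σ κ * z ^ (σ - 1)) ≠ 0) :
    ∀ κ : Fin d → ℂ, (∀ i, ‖κ i‖ = 1) →
      ∀ z : ℂ, 1 ≤ ‖z‖ →
        (∑ σ ∈ Finset.Icc 1 (s + 1), (σ : ℂ) * Qhat d p r a σ κ * z ^ (σ - 1)) ≠ 0 := by
  intro κ hκ z hz
  set P : ℂ[X] := ∑ σ ∈ Finset.range (s + 2), C (Qhat d p r a σ κ) * X ^ σ
  have heval (w : ℂ) : P.eval w = ∑ σ ∈ Finset.range (s + 2), Qhat d p r a σ κ * w ^ σ := by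
    simp [P, eval_finsetSum]
  have hderiv (w : ℂ) : P.derivative.eval w =
      ∑ σ ∈ Finset.Icc 1 (s + 1), (σ : ℂ) * Qhat d p r a σ κ * w ^ (σ - 1) :=
    eval_derivative_sum_range_C_mul_X_pow _ _ w
  have hdeg : 0 < P.degree := by
    have hcoeff : P.coeff (s + 1) ≠ 0 := by
      simpa [P, finsetSum_coeff, coeff_C_mul_X_pow] using hlead κ hκ
    exact natDegree_pos_iff_degree_pos.1 (s.succ_pos.trans_le (le_natDegree_of_ne_zero hcoeff))
  rw [← hderiv]
  refine P.eval_derivative_ne_zero_of_one_le_norm hdeg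
    (fun w hw => hroots κ hκ w ((heval w).symm.trans hw)) (fun w hw hw1 => ?_) hz
  rw [hderiv]
  exact hsimple κ hκ w ((heval w).symm.trans hw) hw1

/-- if for every `κ` on the `d`-torus the leading symbol `Q̂_{s+1}(κ)`
does not vanish, every root `z` of the dispersion relation
`Σ_{σ=0}^{s+1} Q̂_σ(κ) z^σ = 0` satisfies `|z| ≤ 1`, and every such root with
`|z| = 1` is simple, then `Σ_{σ=1}^{s+1} σ Q̂_σ(κ) z^{σ−1} ≠ 0` for every `κ` on
the torus and every `z` with `|z| ≥ 1`. -/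
theorem stmt_6 (d : ℕ) (hd : 1 ≤ d) (s : ℕ) (p r : Fin d → ℕ)
    (a : (Fin d → ℤ) → ℕ → ℝ)
    (hlead : ∀ κ : Fin d → ℂ, (∀ i, ‖κ i‖ = 1) →
      Qhat d p r a (s + 1) κ ≠ 0)
    (hroots : ∀ κ : Fin d → ℂ, (∀ i, ‖κ i‖ = 1) →
      ∀ z : ℂ, (∑ σ ∈ Finset.range (s + 2), Qhat d p r a σ κ * z ^ σ) = 0 →
        ‖z‖ ≤ 1)
    (hsimple : ∀ κ : Fin d → ℂ, (∀ i, ‖κ i‖ = 1) →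
      ∀ z : ℂ, (∑ σ ∈ Finset.range (s + 2), Qhat d p r a σ κ * z ^ σ) = 0 →
        ‖z‖ = 1 →
        (∑ σ ∈ Finset.Icc 1 (s + 1), (σ : ℂ) * Qhat d p r a σ κ * z ^ (σ - 1)) ≠ 0) :
    ∀ κ : Fin d → ℂ, (∀ i, ‖κ i‖ = 1) →
      ∀ z : ℂ, 1 ≤ ‖z‖ →
        (∑ σ ∈ Finset.Icc 1 (s + 1), (σ : ℂ) * Qhat d p r a σ κ * z ^ (σ - 1)) ≠ 0 :=
  stmt_6_general d s p r a hlead hroots hsimple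
end
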